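/- Let g₁¹, g₁², g₂¹, g₂² be reals with d := g₁¹g₂² − g₁²g₂¹ ≠ 0 and let h₁, h₂, h₃ > 0. Define the Teichmüller parameters a₁¹ := √((h₃/h₂)(g₁¹)² + (h₃/h₁)(g₁²)²), a₂¹ := ((h₃/h₂)g₁¹g₂¹ + (h₃/h₁)g₁²g₂²)/a₁¹, and a₂² := (h₃/√(h₁h₂))·d/a₁¹. Then there exist θ ∈ ℝ and h in the Nil group such that h·σ_θ(φ(g₁¹, g₁², 0))·h⁻¹ = (a₁¹, 0, 0) and h·σ_θ(φ(g₂¹, g₂², 0))·h⁻¹ = (a₂¹, a₂², 0), where φ(x,y,z) = (√(h₃/h₂)·x, √(h₃/h₁)·y, (h₃/√(h₁h₂))·z). -/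

import Mathlib

noncomputable section

open Real

/-!
`φ` acts diagonally, so the central coordinates of `φ(gᵢ)` stay `0`. For `θ` with
`(cos θ, sin θ)` proportional to `(x, -y)`, where `(x, y)` is the planar part of `φ(g₁)`, the
rotation `R_θ` carries `(x, y)` to `(a₁¹, 0)` and, preserving inner products and determinants,
the planar part of `φ(g₂)` to `(a₂¹, a₂²)`. Conjugation by `h` keeps the planar part and shifts
the central coordinate by `h¹g² - g¹h²`; since the two planar parts are independent, one `h`
cancels both central coordinates.
-/

/-- Multiplication in the Nil (Bianchi II) group on ℝ³. -/
def nilMul (g h : ℝ × ℝ × ℝ) : ℝ × ℝ × ℝ :=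
  (g.1 + h.1, g.2.1 + h.2.1, g.2.2 + h.2.2 + g.1 * h.2.1)

/-- Inverse in the Nil group. -/
def nilInv (g : ℝ × ℝ × ℝ) : ℝ × ℝ × ℝ :=
  (-g.1, -g.2.1, -g.2.2 + g.1 * g.2.1)

/-- `ζ_θ(x,y) = ½((x²−y²)cos θ − 2xy sin θ) sin θ`. -/
def zeta (θ x y : ℝ) : ℝ :=
  (1 / 2) * ((x ^ 2 - y ^ 2) * Real.cos θ - 2 * x * y * Real.sin θ) * Real.sin θ

/-- The group automorphism `σ_θ(g) = (R_θ(g¹,g²), g³ + ζ_θ(g¹,g²))` of Nil. -/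
def sigmaMap (θ : ℝ) (g : ℝ × ℝ × ℝ) : ℝ × ℝ × ℝ :=
  (g.1 * Real.cos θ - g.2.1 * Real.sin θ,
   g.1 * Real.sin θ + g.2.1 * Real.cos θ,
   g.2.2 + zeta θ g.1 g.2.1)

/-- The automorphism `φ(x,y,z) = (√(h₃/h₂)x, √(h₃/h₁)y, (h₃/√(h₁h₂))z)` of Nil. -/
def phiMap (h₁ h₂ h₃ : ℝ) (g : ℝ × ℝ × ℝ) : ℝ × ℝ × ℝ :=
  (Real.sqrt (h₃ / h₂) * g.1, Real.sqrt (h₃ / h₁) * g.2.1,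
    h₃ / Real.sqrt (h₁ * h₂) * g.2.2)

theorem nilMul_nilMul_nilInv (h g : ℝ × ℝ × ℝ) :
    nilMul (nilMul h g) (nilInv h) = (g.1, g.2.1, g.2.2 + h.1 * g.2.1 - g.1 * h.2.1) := by
  simp only [nilMul, nilInv, Prod.mk.injEq]
  refine ⟨by ring, by ring, by ring⟩

theorem exists_nilMul_conj_eq_of_det_ne_zero (g k : ℝ × ℝ × ℝ)
    (hgk : g.1 * k.2.1 - g.2.1 * k.1 ≠ 0) :
    ∃ h : ℝ × ℝ × ℝ, nilMul (nilMul h g) (nilInv h) = (g.1, g.2.1, 0) ∧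
      nilMul (nilMul h k) (nilInv h) = (k.1, k.2.1, 0) := by
  set D := g.1 * k.2.1 - g.2.1 * k.1
  refine ⟨((g.2.2 * k.1 - k.2.2 * g.1) / D, (g.2.2 * k.2.1 - k.2.2 * g.2.1) / D, 0), ?_, ?_⟩ <;>
  · rw [nilMul_nilMul_nilInv, Prod.mk.injEq, Prod.mk.injEq]
    refine ⟨rfl, rfl, ?_⟩
    field_simp
    ring

theorem exists_cos_mul_sqrt_eq_and_sin_mul_sqrt_eq (x y : ℝ) :
    ∃ θ : ℝ, Real.cos θ * √(x ^ 2 + y ^ 2) = x ∧ Real.sin θ * √(x ^ 2 + y ^ 2) = y := by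
  have hnorm : ‖(⟨x, y⟩ : ℂ)‖ = √(x ^ 2 + y ^ 2) := by
    rw [Complex.norm_def, Complex.normSq_mk, sq, sq]
  refine ⟨Complex.arg ⟨x, y⟩, ?_, ?_⟩
  · rw [mul_comm, ← hnorm, Complex.norm_mul_cos_arg]
  · rw [mul_comm, ← hnorm, Complex.norm_mul_sin_arg]

theorem sigmaMap_mul_eq_of_cos_mul_of_sin_mul {θ r x y : ℝ} (hc : Real.cos θ * r = x)
    (hs : Real.sin θ * r = y) (g : ℝ × ℝ × ℝ) :
    (sigmaMap θ g).1 * r = x * g.1 - y * g.2.1 ∧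
      (sigmaMap θ g).2.1 * r = y * g.1 + x * g.2.1 := by
  simp only [sigmaMap]
  constructor
  · linear_combination g.1 * hc - g.2.1 * hs
  · linear_combination g.1 * hs + g.2.1 * hc

theorem sqrt_div_mul_sqrt_div {a b c : ℝ} (ha : 0 ≤ a) (hb : 0 ≤ b) (hc : 0 ≤ c) :
    √(c / b) * √(c / a) = c / √(a * b) := by
  rw [← sqrt_mul (by positivity), div_mul_div_comm, ← sq, mul_comm b, sqrt_div' _ (by positivity),
    sqrt_sq hc]

theorem exists_conj_sigmaMap_eq (x y z x' y' z' : ℝ) (hdet : x * y' - y * x' ≠ 0) :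
    ∃ (θ : ℝ) (h : ℝ × ℝ × ℝ),
      nilMul (nilMul h (sigmaMap θ (x, y, z))) (nilInv h) = (√(x ^ 2 + y ^ 2), 0, 0) ∧
      nilMul (nilMul h (sigmaMap θ (x', y', z'))) (nilInv h) =
        ((x * x' + y * y') / √(x ^ 2 + y ^ 2), (x * y' - y * x') / √(x ^ 2 + y ^ 2), 0) := by
  obtain ⟨θ, hc, hs⟩ := exists_cos_mul_sqrt_eq_and_sin_mul_sqrt_eq x (-y)
  rw [neg_sq] at hc hs
  set r := √(x ^ 2 + y ^ 2)
  have hr_sq : r ^ 2 = x ^ 2 + y ^ 2 := sq_sqrt (by positivity)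
  obtain ⟨hu₁, hu₂⟩ := sigmaMap_mul_eq_of_cos_mul_of_sin_mul hc hs (x, y, z)
  obtain ⟨hv₁, hv₂⟩ := sigmaMap_mul_eq_of_cos_mul_of_sin_mul hc hs (x', y', z')
  dsimp only at hu₁ hu₂ hv₁ hv₂
  have hr₀ : r ≠ 0 := by
    rintro hr₀
    rw [hr₀, mul_zero] at hv₂
    exact hdet (by linear_combination -hv₂)
  set u := sigmaMap θ (x, y, z)
  set v := sigmaMap θ (x', y', z')
  have hu₁' : u.1 = r := mul_right_cancel₀ hr₀ (by linear_combination hu₁ - hr_sq)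
  have hu₂' : u.2.1 = 0 := mul_right_cancel₀ hr₀ (by rw [hu₂]; ring)
  have hv₁' : v.1 = (x * x' + y * y') / r := eq_div_of_mul_eq hr₀ (by rw [hv₁]; ring)
  have hv₂' : v.2.1 = (x * y' - y * x') / r := eq_div_of_mul_eq hr₀ (by rw [hv₂]; ring)
  obtain ⟨h, hg, hk⟩ := exists_nilMul_conj_eq_of_det_ne_zero u v (by
    rw [hu₁', hu₂', hv₂']; field_simp; simpa using hdet)
  exact ⟨θ, h, by rw [hg, hu₁', hu₂'], by rw [hk, hv₁', hv₂']⟩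

/-- The Teichmüller parameters of the b/1 model: there exist `θ` and `h` conjugating the
images of the generators under `σ_θ ∘ φ` to `(a₁¹,0,0)` and `(a₂¹,a₂²,0)`. -/
theorem nil_teichmuller_parameters (g₁₁ g₁₂ g₂₁ g₂₂ : ℝ)
    (hd : g₁₁ * g₂₂ - g₁₂ * g₂₁ ≠ 0)
    (h₁ h₂ h₃ : ℝ) (hh₁ : 0 < h₁) (hh₂ : 0 < h₂) (hh₃ : 0 < h₃) :
    ∃ (θ : ℝ) (h : ℝ × ℝ × ℝ),
      nilMul (nilMul h (sigmaMap θ (phiMap h₁ h₂ h₃ (g₁₁, g₁₂, (0 : ℝ))))) (nilInv h)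
        = (Real.sqrt (h₃ / h₂ * g₁₁ ^ 2 + h₃ / h₁ * g₁₂ ^ 2), (0 : ℝ), (0 : ℝ)) ∧
      nilMul (nilMul h (sigmaMap θ (phiMap h₁ h₂ h₃ (g₂₁, g₂₂, (0 : ℝ))))) (nilInv h)
        = ((h₃ / h₂ * (g₁₁ * g₂₁) + h₃ / h₁ * (g₁₂ * g₂₂)) /
             Real.sqrt (h₃ / h₂ * g₁₁ ^ 2 + h₃ / h₁ * g₁₂ ^ 2),
           h₃ / Real.sqrt (h₁ * h₂) * (g₁₁ * g₂₂ - g₁₂ * g₂₁) /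
             Real.sqrt (h₃ / h₂ * g₁₁ ^ 2 + h₃ / h₁ * g₁₂ ^ 2),
           (0 : ℝ)) := by
  set A := √(h₃ / h₂)
  set B := √(h₃ / h₁)
  have hA : A ^ 2 = h₃ / h₂ := sq_sqrt (by positivity)
  have hB : B ^ 2 = h₃ / h₁ := sq_sqrt (by positivity)
  have hφ (x y : ℝ) : phiMap h₁ h₂ h₃ (x, y, 0) = (A * x, B * y, 0) := by
    simp only [phiMap, mul_zero]; rfl
  have hAB : A * B = h₃ / √(h₁ * h₂) := sqrt_div_mul_sqrt_div hh₁.le hh₂.le hh₃.le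
  have hdet : A * g₁₁ * (B * g₂₂) - B * g₁₂ * (A * g₂₁) ≠ 0 := by
    rw [show A * g₁₁ * (B * g₂₂) - B * g₁₂ * (A * g₂₁) = A * B * (g₁₁ * g₂₂ - g₁₂ * g₂₁) by ring]
    exact mul_ne_zero (by positivity) hd
  obtain ⟨θ, h, hg, hk⟩ := exists_conj_sigmaMap_eq _ _ 0 _ _ 0 hdet
  rw [← hA, ← hB, ← hAB]
  refine ⟨θ, h, ?_, ?_⟩
  · rw [hφ, hg]
    ring_nf
  · rw [hφ, hk]
    ring_nf
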